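/- Existential quantifier elimination with parameters on a fixed bijective structure: let S be a bijective σ-structure with domain D, and let ∃ȳ φ(x̄, ȳ) be a formula where φ is a quantifier-free Boolean combination of bijective literals not involving cardinality statements. Then there exists a quantifier-free Boolean combination ψ(x̄) of bijective literals over σ augmented by finitely many constant symbols naming elements of D, such that for every tuple ā of elements of D: S ⊨ ∃ȳ φ(ā, ȳ) if and only if S ⊨ ψ(ā). -/

import Mathlib

/-!
Deep embedding of bijective first-order logic (paper: Durand–Grandjean).
A unary functional signature σ has constant symbols indexed by `C`, monadic
predicate symbols indexed by `U`, and unary function symbols indexed by `F`.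
A bijective σ-structure over domain `D` interprets constants by `cI : C → D`,
monadic predicates by `uI : U → D → Prop`, and every unary function symbol by a
permutation of `D`, `fI : F → Equiv.Perm D`.
-/

namespace PaperQE

/-- A bijective term `f_{i₁}^{ε₁} ∘ ⋯ ∘ f_{iₗ}^{εₗ}(·)` encoded as the list of
its signed function symbols (`true` = the symbol, `false` = its inverse). -/
abbrev Word (F : Type) := List (F × Bool)

/-- Evaluation of a bijective term at an element of the domain. -/
def evalWord {F : Type} {D : Type*} (fI : F → Equiv.Perm D) : Word F → D → D
  | [], x => x
  | (f, b) :: w, x => (if b then fI f else (fI f).symm) (evalWord fI w x)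

/-- Bijective atomic formulas other than cardinality statements, with free
variables among `Fin n`: `τ(xᵢ) = τ'(xⱼ)`, `τ(xᵢ) = c`, `U(τ(xᵢ))`. -/
inductive NCAtom (C U F : Type) (n : ℕ) : Type
  | eq : Word F → Fin n → Word F → Fin n → NCAtom C U F n
  | eqc : Word F → Fin n → C → NCAtom C U F n
  | pred : U → Word F → Fin n → NCAtom C U F n

/-- Satisfaction of non-cardinality bijective atoms. -/
def NCAtom.Sat {C U F : Type} {D : Type*} (cI : C → D) (uI : U → D → Prop)
    (fI : F → Equiv.Perm D) : ∀ {n : ℕ}, NCAtom C U F n → (Fin n → D) → Prop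
  | _, .eq w₁ i w₂ j, v => evalWord fI w₁ (v i) = evalWord fI w₂ (v j)
  | _, .eqc w i c, v => evalWord fI w (v i) = cI c
  | _, .pred u w i, v => uI u (evalWord fI w (v i))

/-- Boolean combinations over a type `α` of atoms. -/
inductive BC (α : Type) : Type
  | tru : BC α
  | atom : α → BC α
  | not : BC α → BC α
  | and : BC α → BC α → BC α
  | or : BC α → BC α → BC α

/-- Satisfaction of a Boolean combination, given satisfaction of atoms. -/
def BC.Sat {α : Type} (s : α → Prop) : BC α → Prop
  | .tru => True
  | .atom a => s a
  | .not φ => ¬ BC.Sat s φ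
  | .and φ ψ => BC.Sat s φ ∧ BC.Sat s ψ
  | .or φ ψ => BC.Sat s φ ∨ BC.Sat s ψ

/-- Bijective atomic formulas: non-cardinality atoms together with cardinality
statements `∃^{≥k} x Ψ(x)`, where `Ψ` is a Boolean combination of bijective
atoms in the single variable `x`. -/
inductive BAtom (C U F : Type) (n : ℕ) : Type
  | nc : NCAtom C U F n → BAtom C U F n
  | card : ℕ → BC (NCAtom C U F 1) → BAtom C U F n

/-- Satisfaction of bijective atomic formulas. A cardinality statement
`∃^{≥k} x Ψ(x)` holds when there are at least `k` values of `x` satisfying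
`Ψ`, i.e. there is an injection of `Fin k` into the set defined by `Ψ`. -/
def BAtom.Sat {C U F : Type} {D : Type*} (cI : C → D) (uI : U → D → Prop)
    (fI : F → Equiv.Perm D) : ∀ {n : ℕ}, BAtom C U F n → (Fin n → D) → Prop
  | _, .nc a, v => a.Sat cI uI fI v
  | _, .card k Ψ, _ =>
      ∃ e : Fin k ↪ D, ∀ i : Fin k, Ψ.Sat (fun a => a.Sat cI uI fI (fun _ => e i))

/-- First-order formulas built from bijective atomic formulas (the class
`FO_Bij`), with free variables among `Fin n`. -/
inductive BForm (C U F : Type) : ℕ → Type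
  | atom : ∀ {n}, BAtom C U F n → BForm C U F n
  | not : ∀ {n}, BForm C U F n → BForm C U F n
  | and : ∀ {n}, BForm C U F n → BForm C U F n → BForm C U F n
  | or : ∀ {n}, BForm C U F n → BForm C U F n → BForm C U F n
  | ex : ∀ {n}, BForm C U F (n + 1) → BForm C U F n
  | all : ∀ {n}, BForm C U F (n + 1) → BForm C U F n

/-- Tarskian satisfaction of bijective first-order formulas in a bijective
σ-structure `(D, cI, uI, fI)` under an assignment `v` of the free variables. -/
def BForm.Sat {C U F : Type} {D : Type*} (cI : C → D) (uI : U → D → Prop)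
    (fI : F → Equiv.Perm D) : ∀ {n : ℕ}, BForm C U F n → (Fin n → D) → Prop
  | _, .atom a, v => a.Sat cI uI fI v
  | _, .not φ, v => ¬ BForm.Sat cI uI fI φ v
  | _, .and φ ψ, v => BForm.Sat cI uI fI φ v ∧ BForm.Sat cI uI fI ψ v
  | _, .or φ ψ, v => BForm.Sat cI uI fI φ v ∨ BForm.Sat cI uI fI ψ v
  | _, .ex φ, v => ∃ y : D, BForm.Sat cI uI fI φ (Fin.snoc v y)
  | _, .all φ, v => ∀ y : D, BForm.Sat cI uI fI φ (Fin.snoc v y)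

/-! ### Auxiliary development -/

section Aux

variable {C C' U F : Type} {D : Type*}

lemma evalWord_append (fI : F → Equiv.Perm D) (w₁ w₂ : Word F) (x : D) :
    evalWord fI (w₁ ++ w₂) x = evalWord fI w₁ (evalWord fI w₂ x) := by
  induction w₁ with
  | nil => rfl
  | cons a w ih => cases a; simp [evalWord, ih]

def invWord (w : Word F) : Word F := w.reverse.map fun p => (p.1, !p.2)

lemma evalWord_invWord (fI : F → Equiv.Perm D) (w : Word F) (x : D) :
    evalWord fI (invWord w) (evalWord fI w x) = x := by
  induction w with
  | nil => rfl
  | cons a w ih =>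
    obtain ⟨f, b⟩ := a
    have h1 : invWord ((f, b) :: w) = invWord w ++ [(f, !b)] := by simp [invWord]
    rw [h1, evalWord_append]
    have h2 : evalWord fI [(f, !b)] (evalWord fI ((f, b) :: w) x) = evalWord fI w x := by
      cases b <;> simp [evalWord]
    rw [h2]; exact ih

lemma invWord_invWord (w : Word F) : invWord (invWord w) = w := by
  simp only [invWord, List.map_reverse, List.reverse_reverse, List.map_map]
  have : ((fun p : F × Bool => (p.1, !p.2)) ∘ fun p : F × Bool => (p.1, !p.2)) = id := by
    funext p; simp
  rw [this, List.map_id]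

lemma evalWord_eq_iff (fI : F → Equiv.Perm D) (w : Word F) (x z : D) :
    evalWord fI w x = z ↔ x = evalWord fI (invWord w) z := by
  constructor
  · rintro rfl; rw [evalWord_invWord]
  · rintro rfl
    have := evalWord_invWord fI (invWord w) z
    rwa [invWord_invWord] at this

def NCAtom.mapC {n : ℕ} (g : C → C') : NCAtom C U F n → NCAtom C' U F n
  | .eq w₁ i w₂ j => .eq w₁ i w₂ j
  | .eqc w i c => .eqc w i (g c)
  | .pred u w i => .pred u w i

lemma NCAtom.sat_mapC {n : ℕ} (g : C → C') (cI' : C' → D) (uI : U → D → Prop)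
    (fI : F → Equiv.Perm D) (a : NCAtom C U F n) (v : Fin n → D) :
    (a.mapC g).Sat cI' uI fI v ↔ a.Sat (fun c => cI' (g c)) uI fI v := by
  cases a <;> exact Iff.rfl

def BC.map {α β : Type} (g : α → β) : BC α → BC β
  | .tru => .tru
  | .atom a => .atom (g a)
  | .not φ => .not (φ.map g)
  | .and φ ψ => .and (φ.map g) (ψ.map g)
  | .or φ ψ => .or (φ.map g) (ψ.map g)

lemma BC.sat_map {α β : Type} (g : α → β) (s : β → Prop) (φ : BC α) :
    (φ.map g).Sat s ↔ φ.Sat (fun a => s (g a)) := by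
  induction φ <;> simp [BC.map, BC.Sat, *]

def BC.atoms {α : Type} : BC α → List α
  | .tru => []
  | .atom a => [a]
  | .not φ => φ.atoms
  | .and φ ψ => φ.atoms ++ ψ.atoms
  | .or φ ψ => φ.atoms ++ ψ.atoms

lemma BC.sat_congr {α : Type} {s s' : α → Prop} (φ : BC α)
    (h : ∀ a ∈ φ.atoms, (s a ↔ s' a)) : φ.Sat s ↔ φ.Sat s' := by
  induction φ with
  | tru => exact Iff.rfl
  | atom a => exact h a (by simp [BC.atoms])
  | not φ ih => exact not_congr (ih fun a ha => h a (by simp [BC.atoms, ha]))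
  | and φ ψ ih₁ ih₂ =>
      exact and_congr (ih₁ fun a ha => h a (by simp [BC.atoms, ha]))
        (ih₂ fun a ha => h a (by simp [BC.atoms, ha]))
  | or φ ψ ih₁ ih₂ =>
      exact or_congr (ih₁ fun a ha => h a (by simp [BC.atoms, ha]))
        (ih₂ fun a ha => h a (by simp [BC.atoms, ha]))

def BC.conjList {α : Type} : List (BC α) → BC α
  | [] => .tru
  | x :: xs => .and x (BC.conjList xs)

lemma BC.sat_conjList {α : Type} (s : α → Prop) (l : List (BC α)) :
    (BC.conjList l).Sat s ↔ ∀ χ ∈ l, χ.Sat s := by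
  induction l with
  | nil => simp [BC.conjList, BC.Sat]
  | cons x xs ih => simp [BC.conjList, BC.Sat, ih]

def BC.disjList {α : Type} : List (BC α) → BC α
  | [] => .not .tru
  | x :: xs => .or x (BC.disjList xs)

lemma BC.sat_disjList {α : Type} (s : α → Prop) (l : List (BC α)) :
    (BC.disjList l).Sat s ↔ ∃ χ ∈ l, χ.Sat s := by
  induction l with
  | nil => simp [BC.disjList, BC.Sat]
  | cons x xs ih => simp [BC.disjList, BC.Sat, ih]

/-- Unary atoms in a single eliminated variable. -/
inductive UAt (U F : Type) : Type
  | pred : U → Word F → UAt U F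
  | eqq : Word F → Word F → UAt U F

def UAt.holds (uI : U → D → Prop) (fI : F → Equiv.Perm D) : UAt U F → D → Prop
  | .pred u w, y => uI u (evalWord fI w y)
  | .eqq w₁ w₂, y => evalWord fI w₁ y = evalWord fI w₂ y

def UAt.subst {C : Type} {n : ℕ} : UAt U F → Word F → Fin n → NCAtom C U F n
  | .pred u w, t, j => .pred u (w ++ t) j
  | .eqq w₁ w₂, t, j => .eq (w₁ ++ t) j (w₂ ++ t) j

lemma UAt.sat_subst {n : ℕ} (cI : C → D) (uI : U → D → Prop) (fI : F → Equiv.Perm D)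
    (ua : UAt U F) (t : Word F) (j : Fin n) (v : Fin n → D) :
    (ua.subst t j : NCAtom C U F n).Sat cI uI fI v ↔ ua.holds uI fI (evalWord fI t (v j)) := by
  cases ua <;> simp [UAt.subst, UAt.holds, NCAtom.Sat, evalWord_append]

/-- Classification of an atom in `n+1` variables with respect to the last variable. -/
inductive Cls (C U F : Type) (n : ℕ) (D : Type*) : Type _
  | vonly : NCAtom C U F n → Cls C U F n D
  | link : Word F → Fin n → Cls C U F n D
  | econst : D → Cls C U F n D
  | unary : UAt U F → Cls C U F n D

def Cls.holds {n : ℕ} (cI : C → D) (uI : U → D → Prop) (fI : F → Equiv.Perm D)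
    (v : Fin n → D) (y : D) : Cls C U F n D → Prop
  | .vonly a => a.Sat cI uI fI v
  | .link t j => y = evalWord fI t (v j)
  | .econst d => y = d
  | .unary ua => ua.holds uI fI y

def classify {n : ℕ} (cI : C → D) (fI : F → Equiv.Perm D) :
    NCAtom C U F (n + 1) → Cls C U F n D
  | .eq w₁ i w₂ j =>
      Fin.lastCases
        (Fin.lastCases (.unary (.eqq w₁ w₂)) (fun j' => .link (invWord w₁ ++ w₂) j') j)
        (fun i' =>
          Fin.lastCases (.link (invWord w₂ ++ w₁) i') (fun j' => .vonly (.eq w₁ i' w₂ j')) j)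
        i
  | .eqc w i c =>
      Fin.lastCases (.econst (evalWord fI (invWord w) (cI c)))
        (fun i' => .vonly (.eqc w i' c)) i
  | .pred u w i =>
      Fin.lastCases (.unary (.pred u w)) (fun i' => .vonly (.pred u w i')) i

lemma classify_spec {n : ℕ} (cI : C → D) (uI : U → D → Prop) (fI : F → Equiv.Perm D)
    (a : NCAtom C U F (n + 1)) (v : Fin n → D) (y : D) :
    a.Sat cI uI fI (Fin.snoc v y) ↔ (classify cI fI a).holds cI uI fI v y := by
  cases a with
  | eq w₁ i w₂ j =>
    induction i using Fin.lastCases with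
    | last =>
      induction j using Fin.lastCases with
      | last => simp [classify, Cls.holds, NCAtom.Sat, UAt.holds]
      | cast j' =>
        simp only [classify, Fin.lastCases_last, Fin.lastCases_castSucc, Cls.holds,
          NCAtom.Sat, Fin.snoc_last, Fin.snoc_castSucc, evalWord_append]
        exact evalWord_eq_iff fI w₁ y _
    | cast i' =>
      induction j using Fin.lastCases with
      | last =>
        simp only [classify, Fin.lastCases_last, Fin.lastCases_castSucc, Cls.holds,
          NCAtom.Sat, Fin.snoc_last, Fin.snoc_castSucc, evalWord_append]
        rw [eq_comm]
        exact evalWord_eq_iff fI w₂ y _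
      | cast j' => simp [classify, Cls.holds, NCAtom.Sat]
  | eqc w i c =>
    induction i using Fin.lastCases with
    | last =>
      simp only [classify, Fin.lastCases_last, Cls.holds, NCAtom.Sat, Fin.snoc_last]
      exact evalWord_eq_iff fI w y _
    | cast i' => simp [classify, Cls.holds, NCAtom.Sat]
  | pred u w i =>
    induction i using Fin.lastCases with
    | last => simp [classify, Cls.holds, NCAtom.Sat, UAt.holds]
    | cast i' => simp [classify, Cls.holds, NCAtom.Sat]

end Aux


section Step

variable {C U F : Type} {D : Type*}

lemma step (cI : C → D) (uI : U → D → Prop) (fI : F → Equiv.Perm D) (n : ℕ)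
    (φ : BC (NCAtom C U F (n + 1))) :
    ∃ (r : ℕ) (e : Fin r → D) (ψ : BC (NCAtom (C ⊕ Fin r) U F n)),
      ∀ v : Fin n → D,
        (∃ y : D, φ.Sat (fun a => a.Sat cI uI fI (Fin.snoc v y))) ↔
          ψ.Sat (fun a => a.Sat (Sum.elim cI e) uI fI v) := by
  classical
  set cls : List (Cls C U F n D) := φ.atoms.map (classify cI fI) with hcls
  set links : List (Word F × Fin n) :=
    cls.filterMap (fun c => match c with | .link t j => some (t, j) | _ => none) with hlinks
  set uats : List (UAt U F) :=
    cls.filterMap (fun c => match c with | .unary ua => some ua | _ => none) with huats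
  set Edb : List D :=
    cls.filterMap (fun c => match c with | .econst d => some d | _ => none) with hEdb
  set va : List (NCAtom C U F n) :=
    cls.filterMap (fun c => match c with | .vonly a => some a | _ => none) with hva
  have mem_links : ∀ {t : Word F} {j : Fin n}, Cls.link t j ∈ cls → (t, j) ∈ links :=
    fun h => List.mem_filterMap.2 ⟨_, h, rfl⟩
  have mem_uats : ∀ {ua : UAt U F}, (Cls.unary ua : Cls C U F n D) ∈ cls → ua ∈ uats :=
    fun h => List.mem_filterMap.2 ⟨_, h, rfl⟩
  have mem_Edb : ∀ {d : D}, (Cls.econst d : Cls C U F n D) ∈ cls → d ∈ Edb :=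
    fun h => List.mem_filterMap.2 ⟨_, h, rfl⟩
  have mem_va : ∀ {a : NCAtom C U F n}, Cls.vonly a ∈ cls → a ∈ va :=
    fun h => List.mem_filterMap.2 ⟨_, h, rfl⟩
  set θ : D → (Fin uats.length → Bool) :=
    fun y i => decide ((uats.get i).holds uI fI y) with hθ
  set fib : (Fin uats.length → Bool) → Set D :=
    fun τ => {y | θ y = τ ∧ y ∉ Edb} with hfib
  set KS : Set D := {y | y ∈ Edb} ∪ ⋃ τ, (if (fib τ).Finite then fib τ else ∅) with hKS
  have hKfin : KS.Finite := by
    apply Set.Finite.union (Edb.finite_toSet)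
    apply Set.finite_iUnion
    intro τ
    split_ifs with h
    · exact h
    · exact Set.finite_empty
  set eL : List D := hKfin.toFinset.toList with heL
  set r := eL.length with hr
  set e : Fin r → D := eL.get with he
  have heK : ∀ x ∈ KS, ∃ m : Fin r, e m = x := by
    intro x hx
    have hx2 : x ∈ eL := by
      rw [heL, Finset.mem_toList, Set.Finite.mem_toFinset]; exact hx
    exact List.mem_iff_get.1 hx2
  set cI' : C ⊕ Fin r → D := Sum.elim cI e with hcI'
  -- transfer lemma
  have transfer : ∀ v v' : Fin n → D,
      (∀ a ∈ va, (a.Sat cI uI fI v ↔ a.Sat cI uI fI v')) →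
      (∀ p ∈ links, ∀ q ∈ links,
        (evalWord fI p.1 (v p.2) = evalWord fI q.1 (v q.2) ↔
          evalWord fI p.1 (v' p.2) = evalWord fI q.1 (v' q.2))) →
      (∀ p ∈ links, ∀ m : Fin r,
        (evalWord fI p.1 (v p.2) = e m ↔ evalWord fI p.1 (v' p.2) = e m)) →
      (∀ p ∈ links, ∀ ua ∈ uats,
        (ua.holds uI fI (evalWord fI p.1 (v p.2)) ↔
          ua.holds uI fI (evalWord fI p.1 (v' p.2)))) →
      ∀ y : D, ∃ y' : D, ∀ c ∈ cls,
        (Cls.holds cI uI fI v' y' c ↔ Cls.holds cI uI fI v y c) := by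
    intro v v' hV hLL hLC hLU y
    by_cases hy1 : ∃ p ∈ links, y = evalWord fI p.1 (v p.2)
    · obtain ⟨p, hp, hyp⟩ := hy1
      refine ⟨evalWord fI p.1 (v' p.2), ?_⟩
      intro c hc
      cases c with
      | vonly a => exact (hV a (mem_va hc)).symm
      | link t j =>
        simp only [Cls.holds]
        rw [hyp]
        exact (hLL p hp (t, j) (mem_links hc)).symm
      | econst d =>
        obtain ⟨m, hm⟩ := heK d (Or.inl (mem_Edb hc))
        simp only [Cls.holds]
        rw [hyp, ← hm]
        exact (hLC p hp m).symm
      | unary ua =>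
        simp only [Cls.holds]
        rw [hyp]
        exact (hLU p hp ua (mem_uats hc)).symm
    · push_neg at hy1
      by_cases hy2 : y ∈ KS
      · obtain ⟨m, hm⟩ := heK y hy2
        refine ⟨y, ?_⟩
        intro c hc
        cases c with
        | vonly a => exact (hV a (mem_va hc)).symm
        | link t j =>
          simp only [Cls.holds]
          constructor
          · intro h
            exfalso
            have h2 : evalWord fI t (v j) = e m :=
              (hLC (t, j) (mem_links hc) m).2 (by rw [← h, hm])
            exact hy1 (t, j) (mem_links hc) (by rw [h2, hm])
          · intro h; exact absurd h (hy1 (t, j) (mem_links hc))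
        | econst d => exact Iff.rfl
        | unary ua => exact Iff.rfl
      · have hyE : y ∉ Edb := fun h => hy2 (Or.inl h)
        have hyfib : y ∈ fib (θ y) := ⟨rfl, hyE⟩
        have hinf : (fib (θ y)).Infinite := by
          by_contra hfin
          rw [Set.not_infinite] at hfin
          exact hy2 (Or.inr (Set.mem_iUnion.2 ⟨θ y, by rw [if_pos hfin]; exact hyfib⟩))
        obtain ⟨y', hy'fib, hy'L⟩ := hinf.exists_notMem_finset
          ((links.map fun p => evalWord fI p.1 (v' p.2)).toFinset)
        refine ⟨y', ?_⟩
        intro c hc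
        cases c with
        | vonly a => exact (hV a (mem_va hc)).symm
        | link t j =>
          simp only [Cls.holds]
          constructor
          · intro h
            exfalso
            apply hy'L
            rw [List.mem_toFinset, List.mem_map]
            exact ⟨(t, j), mem_links hc, h.symm⟩
          · intro h; exact absurd h (hy1 (t, j) (mem_links hc))
        | econst d =>
          simp only [Cls.holds]
          have hd : d ∈ Edb := mem_Edb hc
          constructor
          · rintro rfl; exact absurd hd hy'fib.2
          · rintro rfl; exact absurd hd hyE
        | unary ua =>
          simp only [Cls.holds]
          obtain ⟨i, hi⟩ := List.mem_iff_get.1 (mem_uats hc)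
          have hθi := congrFun hy'fib.1 i
          rw [hθ] at hθi
          simp only at hθi
          rw [← hi]
          exact decide_eq_decide.1 hθi
  -- the test atoms
  set T1 : List (NCAtom (C ⊕ Fin r) U F n) := va.map (NCAtom.mapC Sum.inl) with hT1
  set T2 : List (NCAtom (C ⊕ Fin r) U F n) :=
    links.flatMap (fun p => links.map fun q => NCAtom.eq p.1 p.2 q.1 q.2) with hT2
  set T3 : List (NCAtom (C ⊕ Fin r) U F n) :=
    links.flatMap (fun p => (List.finRange r).map fun m => NCAtom.eqc p.1 p.2 (Sum.inr m)) with hT3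
  set T4 : List (NCAtom (C ⊕ Fin r) U F n) :=
    links.flatMap (fun p => uats.map fun ua => ua.subst p.1 p.2) with hT4
  set testAtoms : List (NCAtom (C ⊕ Fin r) U F n) := T1 ++ T2 ++ T3 ++ T4 with hTA
  have hsub1 : ∀ a ∈ T1, a ∈ testAtoms := by
    intro a ha; rw [hTA]; simp only [List.mem_append]; exact Or.inl (Or.inl (Or.inl ha))
  have hsub2 : ∀ a ∈ T2, a ∈ testAtoms := by
    intro a ha; rw [hTA]; simp only [List.mem_append]; exact Or.inl (Or.inl (Or.inr ha))
  have hsub3 : ∀ a ∈ T3, a ∈ testAtoms := by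
    intro a ha; rw [hTA]; simp only [List.mem_append]; exact Or.inl (Or.inr ha)
  have hsub4 : ∀ a ∈ T4, a ∈ testAtoms := by
    intro a ha; rw [hTA]; simp only [List.mem_append]; exact Or.inr ha
  -- main consequence of agreement on test atoms
  have hAgAll : ∀ v₀ v : Fin n → D,
      (∀ a ∈ testAtoms, (a.Sat cI' uI fI v₀ ↔ a.Sat cI' uI fI v)) →
      ∀ y₀ : D, φ.Sat (fun a => a.Sat cI uI fI (Fin.snoc v₀ y₀)) →
      ∃ y' : D, φ.Sat (fun a => a.Sat cI uI fI (Fin.snoc v y')) := by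
    intro v₀ v hAg y₀ hy₀
    have h1 : ∀ a ∈ va, (a.Sat cI uI fI v₀ ↔ a.Sat cI uI fI v) := by
      intro a ha
      have := hAg (a.mapC Sum.inl) (hsub1 _ (List.mem_map_of_mem ha))
      rwa [NCAtom.sat_mapC, NCAtom.sat_mapC] at this
    have h2 : ∀ p ∈ links, ∀ q ∈ links,
        (evalWord fI p.1 (v₀ p.2) = evalWord fI q.1 (v₀ q.2) ↔
          evalWord fI p.1 (v p.2) = evalWord fI q.1 (v q.2)) := by
      intro p hp q hq
      exact hAg (NCAtom.eq p.1 p.2 q.1 q.2)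
        (hsub2 _ (List.mem_flatMap.2 ⟨p, hp, List.mem_map.2 ⟨q, hq, rfl⟩⟩))
    have h3 : ∀ p ∈ links, ∀ m : Fin r,
        (evalWord fI p.1 (v₀ p.2) = e m ↔ evalWord fI p.1 (v p.2) = e m) := by
      intro p hp m
      exact hAg (NCAtom.eqc p.1 p.2 (Sum.inr m))
        (hsub3 _ (List.mem_flatMap.2 ⟨p, hp, List.mem_map.2 ⟨m, List.mem_finRange m, rfl⟩⟩))
    have h4 : ∀ p ∈ links, ∀ ua ∈ uats,
        (ua.holds uI fI (evalWord fI p.1 (v₀ p.2)) ↔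
          ua.holds uI fI (evalWord fI p.1 (v p.2))) := by
      intro p hp ua hua
      have := hAg (ua.subst p.1 p.2)
        (hsub4 _ (List.mem_flatMap.2 ⟨p, hp, List.mem_map.2 ⟨ua, hua, rfl⟩⟩))
      rwa [UAt.sat_subst, UAt.sat_subst] at this
    obtain ⟨y', hy'⟩ := transfer v₀ v h1 h2 h3 h4 y₀
    refine ⟨y', ?_⟩
    have hcongr : ∀ a ∈ φ.atoms,
        (a.Sat cI uI fI (Fin.snoc v y') ↔ a.Sat cI uI fI (Fin.snoc v₀ y₀)) := by
      intro a ha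
      rw [classify_spec, classify_spec]
      exact hy' (classify cI fI a) (List.mem_map_of_mem ha)
    exact (BC.sat_congr φ hcongr).2 hy₀
  -- building ψ
  set mT := testAtoms.length with hmT
  set Good : (Fin mT → Bool) → Prop := fun b =>
    ∃ v₀ : Fin n → D, (∀ i, ((testAtoms.get i).Sat cI' uI fI v₀ ↔ b i = true)) ∧
      ∃ y : D, φ.Sat (fun a => a.Sat cI uI fI (Fin.snoc v₀ y)) with hGoodDef
  set blist : List (Fin mT → Bool) := (Finset.univ.filter Good).toList with hblist
  set ψ : BC (NCAtom (C ⊕ Fin r) U F n) :=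
    BC.disjList (blist.map fun b => BC.conjList ((List.finRange mT).map fun i =>
      if b i then BC.atom (testAtoms.get i) else BC.not (BC.atom (testAtoms.get i)))) with hψ
  refine ⟨r, e, ψ, fun v => ?_⟩
  constructor
  · rintro ⟨y, hy⟩
    set b : Fin mT → Bool := fun i => decide ((testAtoms.get i).Sat cI' uI fI v) with hb
    have hmatch : ∀ i, ((testAtoms.get i).Sat cI' uI fI v ↔ b i = true) := by
      intro i; rw [hb]; simp
    have hGood : Good b := ⟨v, hmatch, y, hy⟩
    apply (BC.sat_disjList _ _).2
    refine ⟨_, List.mem_map.2 ⟨b, ?_, rfl⟩, ?_⟩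
    · rw [hblist]
      exact Finset.mem_toList.2 (Finset.mem_filter.2 ⟨Finset.mem_univ _, hGood⟩)
    · apply (BC.sat_conjList _ _).2
      intro χ hχ
      obtain ⟨i, -, rfl⟩ := List.mem_map.1 hχ
      by_cases hbi : b i = true
      · rw [if_pos hbi]
        exact (hmatch i).2 hbi
      · rw [if_neg hbi]
        intro h
        exact hbi ((hmatch i).1 h)
  · intro hψS
    obtain ⟨χ, hχmem, hχ⟩ := (BC.sat_disjList _ _).1 hψS
    obtain ⟨b, hbmem, rfl⟩ := List.mem_map.1 hχmem
    have hGoodb : Good b := by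
      rw [hblist] at hbmem
      exact (Finset.mem_filter.1 (Finset.mem_toList.1 hbmem)).2
    have hmatch : ∀ i, ((testAtoms.get i).Sat cI' uI fI v ↔ b i = true) := by
      intro i
      have hlit := (BC.sat_conjList _ _).1 hχ _
        (List.mem_map.2 ⟨i, List.mem_finRange i, rfl⟩)
      by_cases hbi : b i = true
      · rw [if_pos hbi] at hlit
        exact iff_of_true hlit hbi
      · rw [if_neg hbi] at hlit
        exact iff_of_false hlit hbi
    obtain ⟨v₀, hm₀, y₀, hy₀⟩ := hGoodb
    have hAg : ∀ a ∈ testAtoms, (a.Sat cI' uI fI v₀ ↔ a.Sat cI' uI fI v) := by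
      intro a ha
      obtain ⟨i, hi⟩ := List.mem_iff_get.1 ha
      rw [← hi]
      exact (hm₀ i).trans (hmatch i).symm
    exact hAgAll v₀ v hAg y₀ hy₀


lemma elimAll {U F : Type} {D : Type*} (uI : U → D → Prop) (fI : F → Equiv.Perm D) (p : ℕ) :
    ∀ (k : ℕ) (C : Type) (cI : C → D) (φ : BC (NCAtom C U F (p + k))),
      ∃ (r : ℕ) (e : Fin r → D) (ψ : BC (NCAtom (C ⊕ Fin r) U F p)),
        ∀ v : Fin p → D,
          (∃ w : Fin k → D, φ.Sat (fun a => a.Sat cI uI fI (Fin.append v w))) ↔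
            ψ.Sat (fun a => a.Sat (Sum.elim cI e) uI fI v) := by
  intro k
  induction k with
  | zero =>
    intro C cI φ
    refine ⟨0, Fin.elim0, φ.map (NCAtom.mapC Sum.inl), fun v => ?_⟩
    rw [BC.sat_map]
    have hap : ∀ w : Fin 0 → D, Fin.append v w = v := by
      intro w
      have hw0 : w = Fin.elim0 := funext fun i => i.elim0
      rw [hw0, Fin.append_elim0]
      rfl
    have h2 : φ.Sat (fun a => (a.mapC Sum.inl).Sat (Sum.elim cI Fin.elim0) uI fI v) ↔
        φ.Sat (fun a => a.Sat cI uI fI v) :=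
      BC.sat_congr φ fun a _ => NCAtom.sat_mapC Sum.inl (Sum.elim cI Fin.elim0) uI fI a v
    constructor
    · rintro ⟨w, hw⟩
      rw [hap w] at hw
      exact h2.2 hw
    · intro h
      refine ⟨Fin.elim0, ?_⟩
      rw [hap]
      exact h2.1 h
  | succ k ih =>
    intro C cI φ
    obtain ⟨r₁, e₁, ψ₁, h₁⟩ := step cI uI fI (p + k) φ
    obtain ⟨r₂, e₂, ψ₂, h₂⟩ := ih (C ⊕ Fin r₁) (Sum.elim cI e₁) ψ₁
    refine ⟨r₁ + r₂, Fin.append e₁ e₂,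
      ψ₂.map (NCAtom.mapC (Sum.elim (Sum.map id (Fin.castAdd r₂))
        (fun m => Sum.inr (Fin.natAdd r₁ m)))), fun v => ?_⟩
    have hiff1 : (∃ w : Fin (k + 1) → D,
        φ.Sat (fun a => a.Sat cI uI fI (Fin.append v w))) ↔
        (∃ (w' : Fin k → D) (y : D),
          φ.Sat (fun a => a.Sat cI uI fI (Fin.snoc (Fin.append v w') y))) := by
      constructor
      · rintro ⟨w, hw⟩
        refine ⟨Fin.init w, w (Fin.last k), ?_⟩
        rw [← Fin.append_snoc, Fin.snoc_init_self]
        exact hw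
      · rintro ⟨w', y, hw⟩
        exact ⟨Fin.snoc w' y, by rw [Fin.append_snoc]; exact hw⟩
    have hiff2 : (∃ (w' : Fin k → D) (y : D),
        φ.Sat (fun a => a.Sat cI uI fI (Fin.snoc (Fin.append v w') y))) ↔
        (∃ w' : Fin k → D, ψ₁.Sat (fun a => a.Sat (Sum.elim cI e₁) uI fI (Fin.append v w'))) :=
      exists_congr fun w' => h₁ (Fin.append v w')
    rw [hiff1, hiff2, h₂ v, BC.sat_map]
    apply BC.sat_congr
    intro a _
    rw [NCAtom.sat_mapC]
    have hfun : (fun c => Sum.elim cI (Fin.append e₁ e₂)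
        ((Sum.elim (Sum.map id (Fin.castAdd r₂)) (fun m => Sum.inr (Fin.natAdd r₁ m))) c)) =
        Sum.elim (Sum.elim cI e₁) e₂ := by
      funext c
      rcases c with (c | m₁) | m₂
      · rfl
      · show Fin.append e₁ e₂ (Fin.castAdd r₂ m₁) = e₁ m₁
        exact Fin.append_left e₁ e₂ m₁
      · show Fin.append e₁ e₂ (Fin.natAdd r₁ m₂) = e₂ m₂
        exact Fin.append_right e₁ e₂ m₂
    rw [hfun]

end Step

end PaperQE

open PaperQE in
/-- Existential quantifier elimination with parameters on a
fixed bijective structure. Let `(D, cI, uI, fI)` be a bijective σ-structure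
(σ a unary functional signature: constants `C`, monadic predicates `U`, unary
function symbols `F`, the latter interpreted as permutations of `D`). For
every formula `∃ȳ φ(x̄, ȳ)` with `φ` a quantifier-free Boolean combination of
bijective literals not involving cardinality statements (`x̄` of length `p`,
`ȳ` of length `k`), there are finitely many new constant symbols naming
elements `e : Fin r → D` of the domain and a quantifier-free Boolean
combination `ψ(x̄)` of bijective literals over the augmented signature
`C ⊕ Fin r` such that, for every tuple `v` of elements of `D`,
`∃ȳ φ(v, ȳ)` holds in the structure iff `ψ(v)` does. -/
theorem existential_elimination_with_parameters
    {C U F : Type} [Fintype C] [Fintype U] [Fintype F]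
    (D : Type*) (cI : C → D) (uI : U → D → Prop) (fI : F → Equiv.Perm D)
    (p k : ℕ) (φ : BC (NCAtom C U F (p + k))) :
    ∃ (r : ℕ) (e : Fin r → D) (ψ : BC (NCAtom (C ⊕ Fin r) U F p)),
      ∀ v : Fin p → D,
        (∃ w : Fin k → D, φ.Sat (fun a => a.Sat cI uI fI (Fin.append v w))) ↔
          ψ.Sat (fun a => a.Sat (Sum.elim cI e) uI fI v) :=
  PaperQE.elimAll uI fI p k C cI φ
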